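/- arXiv:2602.17982 — 2 statements merged into one kernel-verified Lean document; each statement's English description precedes it below -/
import Mathlib

section
/- Let Λ be a finite simple graph, let A, B be sets of vertices, and let Φ₁, Φ₂ ∈ Mincut_Λ(A,B) satisfy Φ₁^A ⊆ Φ₂^A. Set Φ'₁ = Φ₁ ∩ Φ₂^A. Then: (1) Φ₁ ⊆ Φ₂^A ∪ Φ₂; (2) Φ₁ = Φ'₁ ∪ { v ∈ Φ₂ : there is a (possibly constant) walk in Λ from v to a vertex of A whose vertices all lie in (Φ₂^A ∪ Φ₂)∖Φ'₁ and which meets Φ₂ only at its starting vertex v }; (3) Φ₁^A = { w ∈ Φ₂^A : there is a (possibly constant) walk in Λ from w to a vertex of A whose vertices all lie in Φ₂^A∖Φ'₁ }. -/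
universe u

/-- `C` separates `A` from `B` in the graph `G`: every vertex of `A \ C` and every vertex of
`B \ C` lie in different connected components of the subgraph induced on the complement of `C`. -/
def Separates {V : Type u} (G : SimpleGraph V) (A B C : Set V) : Prop :=
  ∀ x (hx : x ∈ A \ C) y (hy : y ∈ B \ C),
    ¬ (G.induce Cᶜ).Reachable ⟨x, hx.2⟩ ⟨y, hy.2⟩

/-- `C` is a minimal cut between `A` and `B`: it separates `A` from `B` and no proper subset
of `C` does. -/
def IsMincutBetween {V : Type u} (G : SimpleGraph V) (A B C : Set V) : Prop :=
  Separates G A B C ∧ ∀ C' ⊆ C, C' ≠ C → ¬ Separates G A B C'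

/-- The collection of all minimal cuts between `A` and `B` in `G`. -/
def Mincut {V : Type u} (G : SimpleGraph V) (A B : Set V) : Set (Set V) :=
  {C | IsMincutBetween G A B C}

/-- `Φ^A`: the union of those connected components of the induced subgraph on the complement of
`Φ` that contain at least one vertex of `A \ Φ`. -/
def sideOf {V : Type u} (G : SimpleGraph V) (A Φ : Set V) : Set V :=
  {v | ∃ (hv : v ∉ Φ), ∃ x, ∃ (hx : x ∈ A \ Φ),
    (G.induce Φᶜ).Reachable ⟨v, hv⟩ ⟨x, hx.2⟩}

/-!
Removing a vertex `v` from a minimal cut `Φ₁` lets a walk from `A` to `B` through, so `v` is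
joined to `A` by a walk meeting `Φ₁` only at `v`. The rest of that walk lies in
`Φ₁^A ⊆ Φ₂^A`, hence avoids `Φ₂`; so if `v ∉ Φ₂^A`, then `v ∈ Φ₂`, and this walk is the one
required in (2). Conversely, a walk as in (2) starting at some `v ∈ Φ₂ \ Φ₁` would avoid `Φ₁`
and place `v` in `Φ₁^A ⊆ Φ₂^A`, which is disjoint from `Φ₂`. For (3): a walk to `A` that
avoids `Φ₁` stays inside `Φ₁^A`.
-/

open SimpleGraph

theorem SimpleGraph.reachable_induce_iff_exists_walk {V : Type u} {G : SimpleGraph V} {s : Set V}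
    {u v : V} (hu : u ∈ s) (hv : v ∈ s) :
    (G.induce s).Reachable ⟨u, hu⟩ ⟨v, hv⟩ ↔ ∃ w : G.Walk u v, ∀ x ∈ w.support, x ∈ s := by
  constructor
  · rintro ⟨p⟩
    have hp : ∀ x ∈ (p.map (Embedding.induce s).toHom).support, x ∈ s := by
      rw [Walk.support_map, List.forall_mem_map]
      exact fun x _ => x.2
    exact ⟨_, hp⟩
  · rintro ⟨w, hw⟩
    exact ⟨w.induce s hw⟩

section

variable {V : Type u} {G : SimpleGraph V} {A B Φ : Set V}

theorem mem_sideOf_iff {v : V} :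
    v ∈ sideOf G A Φ ↔ ∃ a ∈ A, ∃ w : G.Walk v a, ∀ c ∈ w.support, c ∉ Φ := by
  constructor
  · rintro ⟨hv, a, ha, hr⟩
    exact ⟨a, ha.1, (reachable_induce_iff_exists_walk hv ha.2).1 hr⟩
  · rintro ⟨a, ha, w, hw⟩
    have ha' : a ∉ Φ := hw a w.end_mem_support
    exact ⟨hw v w.start_mem_support, a, ⟨ha, ha'⟩,
      (reachable_induce_iff_exists_walk _ ha').2 ⟨w, hw⟩⟩

theorem mem_sideOf_of_mem_support {v a c : V} (ha : a ∈ A) (w : G.Walk v a)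
    (hw : ∀ c ∈ w.support, c ∉ Φ) (hc : c ∈ w.support) : c ∈ sideOf G A Φ := by
  classical
  exact mem_sideOf_iff.2 ⟨a, ha, w.dropUntil c hc,
    fun d hd => hw d (w.support_dropUntil_subset_support hc hd)⟩

theorem mem_sideOf_of_mem_support_tail {v a c : V} (ha : a ∈ A) (w : G.Walk v a)
    (hw : ∀ c ∈ w.support.tail, c ∉ Φ) (hc : c ∈ w.support.tail) : c ∈ sideOf G A Φ := by
  cases w with
  | nil => simp at hc
  | cons _ p =>
    rw [Walk.support_cons, List.tail_cons] at hw hc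
    exact mem_sideOf_of_mem_support ha p hw hc

theorem IsMincutBetween.exists_walk_support_tail_notMem (h : IsMincutBetween G A B Φ) {v : V}
    (hv : v ∈ Φ) : ∃ a ∈ A, ∃ w : G.Walk v a, ∀ c ∈ w.support.tail, c ∉ Φ := by
  classical
  have hne : Φ \ {v} ≠ Φ := fun heq => (heq.symm ▸ hv : v ∈ Φ \ {v}).2 rfl
  have hns : ¬ Separates G A B (Φ \ {v}) := h.2 _ Set.sdiff_subset hne
  simp only [Separates, not_forall, not_not] at hns
  obtain ⟨x, hx, y, hy, hr⟩ := hns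
  obtain ⟨w₀, hw₀⟩ := (reachable_induce_iff_exists_walk hx.2 hy.2).1 hr
  have hw₀Φ : ∀ c ∈ w₀.support, c ∈ Φ → c = v := fun c hc hcΦ => by
    simpa [hcΦ] using hw₀ c hc
  by_cases hvw₀ : v ∈ w₀.support
  · -- being a path, `p` visits `v` only at its start
    let p := (w₀.takeUntil v hvw₀).reverse.bypass
    have hp : p.support ⊆ w₀.support := fun c hc => by
      have hc' := (Walk.support_bypass_subset_support _) hc
      rw [Walk.support_reverse, List.mem_reverse] at hc'
      exact w₀.support_takeUntil_subset_support hvw₀ hc'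
    have hvp : v ∉ p.support.tail := by
      have hnodup : p.support.Nodup := (Walk.bypass_isPath _).support_nodup
      rw [← Walk.cons_tail_support p] at hnodup
      exact (List.nodup_cons.1 hnodup).1
    refine ⟨x, hx.1, p, fun c hc hcΦ => hvp ?_⟩
    exact (hw₀Φ c (hp (List.mem_of_mem_tail hc)) hcΦ) ▸ hc
  · have hw₀' : ∀ c ∈ w₀.support, c ∉ Φ := fun c hc hcΦ => hvw₀ (hw₀Φ c hc hcΦ ▸ hc)
    have hxΦ := hw₀' x w₀.start_mem_support
    have hyΦ := hw₀' y w₀.end_mem_support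
    exact absurd ((reachable_induce_iff_exists_walk hxΦ hyΦ).2 ⟨w₀, hw₀'⟩)
      (h.1 x ⟨hx.1, hxΦ⟩ y ⟨hy.1, hyΦ⟩)

theorem sideOf_eq_of_subset {T : Set V} (hT : sideOf G A Φ ⊆ T) :
    sideOf G A Φ = {v | v ∈ T ∧ ∃ a ∈ A, ∃ w : G.Walk v a,
      ∀ c ∈ w.support, c ∈ T \ (Φ ∩ T)} := by
  ext v
  constructor
  · intro hv
    obtain ⟨a, ha, w, hw⟩ := mem_sideOf_iff.1 hv
    exact ⟨hT hv, a, ha, w,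
      fun c hc => ⟨hT (mem_sideOf_of_mem_support ha w hw hc), fun h => hw c hc h.1⟩⟩
  · rintro ⟨-, a, ha, w, hw⟩
    exact mem_sideOf_iff.2 ⟨a, ha, w, fun c hc h => (hw c hc).2 ⟨h, (hw c hc).1⟩⟩

variable {Φ₁ Φ₂ : Set V}

theorem IsMincutBetween.exists_walk_of_notMem_sideOf (h₁ : IsMincutBetween G A B Φ₁)
    (hle : sideOf G A Φ₁ ⊆ sideOf G A Φ₂) {v : V} (hv : v ∈ Φ₁) (hv₂ : v ∉ sideOf G A Φ₂) :
    v ∈ Φ₂ ∧ ∃ a ∈ A, ∃ w : G.Walk v a,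
      (∀ c ∈ w.support, c ∈ (sideOf G A Φ₂ ∪ Φ₂) \ (Φ₁ ∩ sideOf G A Φ₂)) ∧
      (∀ c ∈ w.support, c ∈ Φ₂ → c = v) := by
  obtain ⟨a, ha, w, hw⟩ := h₁.exists_walk_support_tail_notMem hv
  have htail : ∀ c ∈ w.support.tail, c ∈ sideOf G A Φ₂ :=
    fun c hc => hle (mem_sideOf_of_mem_support_tail ha w hw hc)
  have hvΦ₂ : v ∈ Φ₂ := by
    by_contra hvΦ₂
    refine hv₂ (mem_sideOf_iff.2 ⟨a, ha, w, fun c hc => ?_⟩)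
    rcases w.mem_support_iff.1 hc with rfl | hc
    · exact hvΦ₂
    · exact (htail c hc).1
  refine ⟨hvΦ₂, a, ha, w, fun c hc => ?_, fun c hc hcΦ₂ => ?_⟩
  · rcases w.mem_support_iff.1 hc with rfl | hc
    · exact ⟨Or.inr hvΦ₂, fun h => hv₂ h.2⟩
    · exact ⟨Or.inl (htail c hc), fun h => hw c hc h.1⟩
  · rcases w.mem_support_iff.1 hc with rfl | hc
    · rfl
    · exact absurd hcΦ₂ (htail c hc).1

theorem mem_of_exists_walk_of_sideOf_subset (hle : sideOf G A Φ₁ ⊆ sideOf G A Φ₂) {v a : V}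
    (hv : v ∈ Φ₂) (ha : a ∈ A) (w : G.Walk v a)
    (hw : ∀ c ∈ w.support, c ∈ (sideOf G A Φ₂ ∪ Φ₂) \ (Φ₁ ∩ sideOf G A Φ₂))
    (hw₂ : ∀ c ∈ w.support, c ∈ Φ₂ → c = v) : v ∈ Φ₁ := by
  by_contra hv₁
  have hwΦ₁ : ∀ c ∈ w.support, c ∉ Φ₁ := fun c hc hcΦ₁ => by
    rcases (hw c hc).1 with hcS | hcΦ₂
    · exact (hw c hc).2 ⟨hcΦ₁, hcS⟩
    · exact hv₁ (hw₂ c hc hcΦ₂ ▸ hcΦ₁)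
  exact (hle (mem_sideOf_iff.2 ⟨a, ha, w, hwΦ₁⟩)).1 hv

end

theorem mincut_comparable_description_general {V : Type u} (G : SimpleGraph V)
    (A B Φ₁ Φ₂ : Set V) (h₁ : Φ₁ ∈ Mincut G A B)
    (hle : sideOf G A Φ₁ ⊆ sideOf G A Φ₂) :
    Φ₁ ⊆ sideOf G A Φ₂ ∪ Φ₂ ∧
    Φ₁ = (Φ₁ ∩ sideOf G A Φ₂) ∪
      {v | v ∈ Φ₂ ∧ ∃ a ∈ A, ∃ w : G.Walk v a,
        (∀ c ∈ w.support, c ∈ (sideOf G A Φ₂ ∪ Φ₂) \ (Φ₁ ∩ sideOf G A Φ₂)) ∧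
        (∀ c ∈ w.support, c ∈ Φ₂ → c = v)} ∧
    sideOf G A Φ₁ = {v | v ∈ sideOf G A Φ₂ ∧ ∃ a ∈ A, ∃ w : G.Walk v a,
        ∀ c ∈ w.support, c ∈ sideOf G A Φ₂ \ (Φ₁ ∩ sideOf G A Φ₂)} := by
  have key := fun v => IsMincutBetween.exists_walk_of_notMem_sideOf (v := v) h₁ hle
  refine ⟨fun v hv => ?_, Set.ext fun v => ⟨fun hv => ?_, ?_⟩, sideOf_eq_of_subset hle⟩
  · by_cases hvS : v ∈ sideOf G A Φ₂
    · exact Or.inl hvS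
    · exact Or.inr (key v hv hvS).1
  · by_cases hvS : v ∈ sideOf G A Φ₂
    · exact Or.inl ⟨hv, hvS⟩
    · exact Or.inr (key v hv hvS)
  · rintro (hv | ⟨hvΦ₂, a, ha, w, hw, hw₂⟩)
    · exact hv.1
    · exact mem_of_exists_walk_of_sideOf_subset hle hvΦ₂ ha w hw hw₂

/-- Lemma `lem:comparable1`. Suppose `Φ₁, Φ₂ ∈ Mincut(A,B)` with
`Φ₁^A ⊆ Φ₂^A`, and set `Φ'₁ = Φ₁ ∩ Φ₂^A`. Then (1) `Φ₁ ⊆ Φ₂^A ∪ Φ₂`; (2) `Φ₁` equals `Φ'₁`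
together with the vertices of `Φ₂` joined to `A` by a walk in `(Φ₂^A ∪ Φ₂) ∖ Φ'₁` meeting `Φ₂`
only at its start; (3) `Φ₁^A` consists of the vertices of `Φ₂^A` joined to `A` by a walk in
`Φ₂^A ∖ Φ'₁`. -/
theorem mincut_comparable_description {V : Type u} [Fintype V] (G : SimpleGraph V)
    (A B Φ₁ Φ₂ : Set V) (h₁ : Φ₁ ∈ Mincut G A B) (h₂ : Φ₂ ∈ Mincut G A B)
    (hle : sideOf G A Φ₁ ⊆ sideOf G A Φ₂) :
    Φ₁ ⊆ sideOf G A Φ₂ ∪ Φ₂ ∧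
    Φ₁ = (Φ₁ ∩ sideOf G A Φ₂) ∪
      {v | v ∈ Φ₂ ∧ ∃ a ∈ A, ∃ w : G.Walk v a,
        (∀ c ∈ w.support, c ∈ (sideOf G A Φ₂ ∪ Φ₂) \ (Φ₁ ∩ sideOf G A Φ₂)) ∧
        (∀ c ∈ w.support, c ∈ Φ₂ → c = v)} ∧
    sideOf G A Φ₁ = {v | v ∈ sideOf G A Φ₂ ∧ ∃ a ∈ A, ∃ w : G.Walk v a,
        ∀ c ∈ w.support, c ∈ sideOf G A Φ₂ \ (Φ₁ ∩ sideOf G A Φ₂)} :=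
  mincut_comparable_description_general G A B Φ₁ Φ₂ h₁ hle
end

section
/- Let Λ be a finite simple graph and let A, B be sets of vertices. If Φ₁, Φ₂ ∈ Mincut_Λ(A,B) satisfy Φ₁ < Φ₂, and Φ ∈ Mincut_Λ(Φ₁, Φ₂), then Φ ∈ Mincut_Λ(A,B) and Φ₁ ≤ Φ ≤ Φ₂. -/
/-!
Write `C^A` for `sideOf G A C`. Minimality of a cut `C` between `A` and `B` means that every
`x ∈ C` is reached from `A` by a path inside `C^A ∪ {x}`, and from `B` by one inside `C^B ∪ {x}`.
Since `Φ₁^A ⊆ Φ₂^A`, this shows that `Φ₂^B` misses `Φ₁`. Then `Φ₁^A` and `Φ₂^B` both miss `Φ`: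
otherwise removing their intersection with `Φ` would leave a smaller cut between `Φ₁` and `Φ₂`.
So if a proper subset of `Φ` let some `x ∈ Φ₁` reach some `y ∈ Φ₂`, prolonging the path by paths
from `A` to `x` and from `y` to `B` would give an `A`–`B` path avoiding it. That `Φ` separates `A`
from `B`, and the inclusions of sides, hold because a path avoiding `Φ` cannot meet both `Φ₁`
and `Φ₂`.
-/

universe u

namespace SimpleGraph

variable {V : Type u} (G : SimpleGraph V)

def ReachableIn (s : Set V) (x y : V) : Prop :=
  ∃ w : G.Walk x y, ∀ v ∈ w.support, v ∈ s

variable {G} {s t : Set V} {x y z : V}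

theorem reachable_induce_iff_reachableIn (hx : x ∈ s) (hy : y ∈ s) :
    (G.induce s).Reachable ⟨x, hx⟩ ⟨y, hy⟩ ↔ G.ReachableIn s x y :=
  ⟨fun ⟨p⟩ => by
    have hp : ∀ v ∈ (p.map (Embedding.induce s).toHom).support, v ∈ s := by
      simp only [Walk.support_map, List.mem_map]
      rintro _ ⟨u, -, rfl⟩
      exact u.2
    exact ⟨_, hp⟩,
    fun ⟨w, hw⟩ => ⟨w.induce s hw⟩⟩

namespace ReachableIn

theorem left_mem (h : G.ReachableIn s x y) : x ∈ s :=
  h.elim fun w hw => hw x w.start_mem_support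

theorem right_mem (h : G.ReachableIn s x y) : y ∈ s :=
  h.elim fun w hw => hw y w.end_mem_support

theorem refl (hx : x ∈ s) : G.ReachableIn s x x :=
  ⟨.nil, by simpa⟩

theorem of_adj (hxy : G.Adj x y) (hx : x ∈ s) (hy : y ∈ s) : G.ReachableIn s x y :=
  ⟨hxy.toWalk, by simp [hx, hy]⟩

theorem symm (h : G.ReachableIn s x y) : G.ReachableIn s y x :=
  h.elim fun w hw => ⟨w.reverse, by simpa using hw⟩

theorem trans (h : G.ReachableIn s x y) (h' : G.ReachableIn s y z) : G.ReachableIn s x z := by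
  obtain ⟨w, hw⟩ := h
  obtain ⟨w', hw'⟩ := h'
  refine ⟨w.append w', fun v hv => ?_⟩
  rcases (Walk.mem_support_append_iff _ _).mp hv with hv | hv
  exacts [hw v hv, hw' v hv]

theorem mono (hst : s ⊆ t) (h : G.ReachableIn s x y) : G.ReachableIn t x y :=
  h.elim fun w hw => ⟨w, fun v hv => hst (hw v hv)⟩

theorem diff_or_exists_adj (h : G.ReachableIn s x y) (hx : x ∉ t) :
    G.ReachableIn (s \ t) x y ∨
      ∃ p z, G.ReachableIn (s \ t) x p ∧ G.Adj p z ∧ z ∈ s ∧ z ∈ t := by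
  obtain ⟨w, hw⟩ := h
  induction w with
  | nil => exact .inl (refl ⟨hw _ (by simp), hx⟩)
  | @cons u c _ huc w ih =>
    have hu : u ∈ s \ t := ⟨hw u (by simp), hx⟩
    have hcs : c ∈ s := hw c (by simp)
    by_cases hct : c ∈ t
    · exact .inr ⟨u, c, refl hu, huc, hcs, hct⟩
    have hu_c : G.ReachableIn (s \ t) u c := of_adj huc hu ⟨hcs, hct⟩
    rcases ih hct (fun v hv => hw v (by simp [hv])) with h | ⟨p, z, hcp, hpz, hz⟩
    · exact .inl (hu_c.trans h)
    · exact .inr ⟨p, z, hu_c.trans hcp, hpz, hz⟩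

theorem diff_or_exists_mem (h : G.ReachableIn s x y) (t : Set V) :
    G.ReachableIn (s \ t) x y ∨ ∃ z ∈ t, G.ReachableIn s x z := by
  by_cases hx : x ∈ t
  · exact .inr ⟨x, hx, refl h.left_mem⟩
  rcases h.diff_or_exists_adj hx with h' | ⟨p, z, hxp, hpz, hzs, hzt⟩
  · exact .inl h'
  · exact .inr ⟨z, hzt, (hxp.mono Set.sdiff_subset).trans (of_adj hpz hxp.right_mem.1 hzs)⟩

end ReachableIn

end SimpleGraph

open SimpleGraph Set

section

variable {V : Type u} {G : SimpleGraph V} {A B C D Φ₁ Φ₂ Φ : Set V} {v w x : V}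

theorem separates_iff : Separates G A B C ↔ ∀ x ∈ A, ∀ y ∈ B, ¬ G.ReachableIn Cᶜ x y :=
  ⟨fun h x hx y hy hxy => h x ⟨hx, hxy.left_mem⟩ y ⟨hy, hxy.right_mem⟩
      ((reachable_induce_iff_reachableIn _ _).mpr hxy),
    fun h x hx y hy hxy => h x hx.1 y hy.1 ((reachable_induce_iff_reachableIn _ _).mp hxy)⟩

theorem Separates.symm (h : Separates G A B C) : Separates G B A C :=
  separates_iff.mpr fun x hx y hy hxy => separates_iff.mp h y hy x hx hxy.symm

theorem IsMincutBetween.symm (h : IsMincutBetween G A B C) : IsMincutBetween G B A C :=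
  ⟨h.1.symm, fun C' hC' hne hsep => h.2 C' hC' hne hsep.symm⟩

theorem mem_sideOf_iff_s4 : v ∈ sideOf G A C ↔ ∃ a ∈ A, G.ReachableIn Cᶜ v a :=
  ⟨fun ⟨_, a, ha, hva⟩ => ⟨a, ha.1, (reachable_induce_iff_reachableIn _ _).mp hva⟩,
    fun ⟨a, ha, hva⟩ => ⟨hva.left_mem, a, ⟨ha, hva.right_mem⟩, (reachable_induce_iff_reachableIn _ _).mpr hva⟩⟩

theorem sideOf_subset_compl : sideOf G A C ⊆ Cᶜ :=
  fun _ ⟨hv, _⟩ => hv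

theorem mem_sideOf_of_adj (hv : v ∈ sideOf G A C) (hvw : G.Adj v w) (hw : w ∉ C) :
    w ∈ sideOf G A C := by
  obtain ⟨a, ha, hva⟩ := mem_sideOf_iff_s4.mp hv
  exact mem_sideOf_iff_s4.mpr ⟨a, ha, (ReachableIn.of_adj hvw.symm hw hva.left_mem).trans hva⟩

theorem SimpleGraph.ReachableIn.restrict_sideOf (hv : v ∈ sideOf G A C)
    (h : G.ReachableIn Cᶜ v w) : G.ReachableIn (sideOf G A C) v w := by
  rcases h.diff_or_exists_adj (t := (sideOf G A C)ᶜ) (not_not.mpr hv) with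
    h' | ⟨p, z, hvp, hpz, hzC, hz⟩
  · exact h'.mono fun u hu => not_not.mp hu.2
  · exact absurd (mem_sideOf_of_adj (not_not.mp hvp.right_mem.2) hpz hzC) hz

theorem sideOf_subset_sideOf (h : sideOf G A C ⊆ Dᶜ) : sideOf G A C ⊆ sideOf G A D := by
  intro v hv
  obtain ⟨a, ha, hva⟩ := mem_sideOf_iff_s4.mp hv
  exact mem_sideOf_iff_s4.mpr ⟨a, ha, (hva.restrict_sideOf hv).mono h⟩

theorem IsMincutBetween.exists_reachableIn_insert_sideOf (h : IsMincutBetween G A B C)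
    (hx : x ∈ C) : ∃ a ∈ A, G.ReachableIn (insert x (sideOf G A C)) a x := by
  have hne : C \ {x} ≠ C := fun hC => (hC.symm ▸ hx : x ∈ C \ {x}).2 rfl
  have hfail := h.2 _ sdiff_subset hne
  simp only [separates_iff, not_forall, not_not] at hfail
  obtain ⟨a, ha, b, hb, hab⟩ := hfail
  by_cases hax : a = x
  · subst hax
    exact ⟨a, ha, .refl (mem_insert a _)⟩
  have hCx : (C \ {x})ᶜ \ {x} ⊆ Cᶜ := fun v hv hvC => hv.1 ⟨hvC, hv.2⟩
  rcases hab.diff_or_exists_adj (t := {x}) hax with h' | ⟨p, z, hap, hpz, -, rfl⟩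
  · exact absurd (h'.mono hCx) (separates_iff.mp h.1 a ha b hb)
  have hap' := hap.mono hCx
  have hp : p ∈ sideOf G A C := mem_sideOf_iff_s4.mpr ⟨a, ha, hap'.symm⟩
  refine ⟨a, ha, ?_⟩
  exact ((hap'.symm.restrict_sideOf hp).symm.mono (subset_insert _ _)).trans
    (.of_adj hpz (mem_insert_of_mem _ hp) (mem_insert _ _))

theorem IsMincutBetween.sideOf_subset_compl_swap (h₁ : IsMincutBetween G A B Φ₁)
    (h₂ : Separates G A B Φ₂) (hle : sideOf G A Φ₁ ⊆ Φ₂ᶜ) : sideOf G B Φ₂ ⊆ Φ₁ᶜ := by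
  intro v hvB hv₁
  obtain ⟨a, ha, hav⟩ := h₁.exists_reachableIn_insert_sideOf hv₁
  obtain ⟨b, hb, hvb⟩ := mem_sideOf_iff_s4.mp hvB
  have hsub : insert v (sideOf G A Φ₁) ⊆ Φ₂ᶜ := insert_subset_iff.mpr ⟨hvb.left_mem, hle⟩
  exact separates_iff.mp h₂ a ha b hb ((hav.mono hsub).trans hvb)

-- `Φ \ Φ₁^A` still separates `Φ₁` from `Φ₂`: a path from `Φ₂` entering `Φ₁^A` meets `Φ₁` first.
theorem IsMincutBetween.sideOf_subset_compl (hΦ : IsMincutBetween G Φ₁ Φ₂ Φ)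
    (hS : sideOf G A Φ₁ ⊆ Φ₂ᶜ) : sideOf G A Φ₁ ⊆ Φᶜ := by
  set S := sideOf G A Φ₁
  have hsep : Separates G Φ₁ Φ₂ (Φ \ S) := by
    refine separates_iff.mpr fun x hx y hy hxy => ?_
    have hcompl : (Φ \ S)ᶜ \ S ⊆ Φᶜ := fun v hv hvΦ => hv.1 ⟨hvΦ, hv.2⟩
    rcases hxy.symm.diff_or_exists_adj (t := S) fun hyS => hS hyS hy with
      h | ⟨p, z, hyp, hpz, -, hzS⟩
    · exact separates_iff.mp hΦ.1 x hx y hy (h.mono hcompl).symm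
    · have hp : p ∈ Φ₁ := by_contra fun hp => hyp.right_mem.2 (mem_sideOf_of_adj hzS hpz.symm hp)
      exact separates_iff.mp hΦ.1 p hp y hy (hyp.mono hcompl).symm
  have heq : Φ \ S = Φ := by_contra fun hne => hΦ.2 _ sdiff_subset hne hsep
  intro v hvS hvΦ
  exact (heq.symm ▸ hvΦ : v ∈ Φ \ S).2 hvS

theorem Separates.reachableIn_compl_or (hΦ : Separates G Φ₁ Φ₂ Φ) (h : G.ReachableIn Φᶜ v w) :
    G.ReachableIn Φ₁ᶜ v w ∨ G.ReachableIn Φ₂ᶜ v w := by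
  rcases h.diff_or_exists_mem Φ₁ with h₁ | ⟨x, hx, hvx⟩
  · exact .inl (h₁.mono fun _ hu => hu.2)
  rcases h.diff_or_exists_mem Φ₂ with h₂ | ⟨y, hy, hvy⟩
  · exact .inr (h₂.mono fun _ hu => hu.2)
  exact absurd (hvx.symm.trans hvy) (separates_iff.mp hΦ x hx y hy)

theorem Separates.of_separates_between (h₁ : Separates G A B Φ₁) (h₂ : Separates G A B Φ₂)
    (hΦ : Separates G Φ₁ Φ₂ Φ) : Separates G A B Φ := by
  refine separates_iff.mpr fun a ha b hb hab => ?_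
  rcases hΦ.reachableIn_compl_or hab with h | h
  exacts [separates_iff.mp h₁ a ha b hb h, separates_iff.mp h₂ a ha b hb h]

theorem Separates.sideOf_subset_sideOf (hΦ : Separates G Φ₁ Φ₂ Φ)
    (hle : sideOf G A Φ₁ ⊆ sideOf G A Φ₂) : sideOf G A Φ ⊆ sideOf G A Φ₂ := by
  intro v hv
  obtain ⟨a, ha, hva⟩ := mem_sideOf_iff_s4.mp hv
  rcases hΦ.reachableIn_compl_or hva with h | h
  exacts [hle (mem_sideOf_iff_s4.mpr ⟨a, ha, h⟩), mem_sideOf_iff_s4.mpr ⟨a, ha, h⟩]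

theorem IsMincutBetween.not_separates_of_subset_of_ne (h₁ : IsMincutBetween G A B Φ₁)
    (h₂ : IsMincutBetween G A B Φ₂) (hΦ : IsMincutBetween G Φ₁ Φ₂ Φ)
    (hA : sideOf G A Φ₁ ⊆ Φᶜ) (hB : sideOf G B Φ₂ ⊆ Φᶜ) (hC : C ⊆ Φ) (hne : C ≠ Φ) :
    ¬ Separates G A B C := by
  intro hsep
  have hfail := hΦ.2 C hC hne
  simp only [separates_iff, not_forall, not_not] at hfail
  obtain ⟨x, hx, y, hy, hxy⟩ := hfail
  have hΦC : Φᶜ ⊆ Cᶜ := compl_subset_compl.mpr hC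
  obtain ⟨a, ha, hax⟩ := h₁.exists_reachableIn_insert_sideOf hx
  obtain ⟨b, hb, hby⟩ := h₂.symm.exists_reachableIn_insert_sideOf hy
  have hax' := hax.mono (insert_subset_iff.mpr ⟨hxy.left_mem, hA.trans hΦC⟩)
  have hby' := hby.mono (insert_subset_iff.mpr ⟨hxy.right_mem, hB.trans hΦC⟩)
  exact separates_iff.mp hsep a ha b hb ((hax'.trans hxy).trans hby'.symm)

end

theorem mincut_squeeze_general {V : Type u} (G : SimpleGraph V)
    (A B Φ₁ Φ₂ Φ : Set V) (h₁ : Φ₁ ∈ Mincut G A B) (h₂ : Φ₂ ∈ Mincut G A B)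
    (hle : sideOf G A Φ₁ ⊆ sideOf G A Φ₂)
    (hΦ : Φ ∈ Mincut G Φ₁ Φ₂) :
    Φ ∈ Mincut G A B ∧ sideOf G A Φ₁ ⊆ sideOf G A Φ ∧ sideOf G A Φ ⊆ sideOf G A Φ₂ := by
  have h₁₂ : sideOf G A Φ₁ ⊆ Φ₂ᶜ := hle.trans sideOf_subset_compl
  have hA : sideOf G A Φ₁ ⊆ Φᶜ := IsMincutBetween.sideOf_subset_compl hΦ h₁₂
  have hB : sideOf G B Φ₂ ⊆ Φᶜ := IsMincutBetween.sideOf_subset_compl (IsMincutBetween.symm hΦ)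
    (IsMincutBetween.sideOf_subset_compl_swap h₁ h₂.1 h₁₂)
  exact ⟨⟨h₁.1.of_separates_between h₂.1 hΦ.1,
      fun C hC hne => IsMincutBetween.not_separates_of_subset_of_ne h₁ h₂ hΦ hA hB hC hne⟩,
    sideOf_subset_sideOf hA, hΦ.1.sideOf_subset_sideOf hle⟩

/-- Lemma `lem:squeez`. If `Φ₁ < Φ₂` in `Mincut(A,B)` and
`Φ ∈ Mincut(Φ₁,Φ₂)`, then `Φ ∈ Mincut(A,B)` and `Φ₁ ≤ Φ ≤ Φ₂`. -/
theorem mincut_squeeze {V : Type u} [Fintype V] (G : SimpleGraph V)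
    (A B Φ₁ Φ₂ Φ : Set V) (h₁ : Φ₁ ∈ Mincut G A B) (h₂ : Φ₂ ∈ Mincut G A B)
    (hle : sideOf G A Φ₁ ⊆ sideOf G A Φ₂) (hne : Φ₁ ≠ Φ₂)
    (hΦ : Φ ∈ Mincut G Φ₁ Φ₂) :
    Φ ∈ Mincut G A B ∧ sideOf G A Φ₁ ⊆ sideOf G A Φ ∧ sideOf G A Φ ⊆ sideOf G A Φ₂ :=
  mincut_squeeze_general G A B Φ₁ Φ₂ Φ h₁ h₂ hle hΦ
end
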